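/- arXiv:2304.11344 — 7 statements merged into one kernel-verified Lean document; each statement's English description precedes it below -/
import Mathlib

section
/- For every natural number n ≥ 1, all real numbers a₁, …, aₙ, and every real r > 0, the inequality (∑_{d=1}^{n} 4^{d−1} d² a_d² r^{d−1}) · (∑_{d=1}^{n} d a_d² r^{d−1}) ≥ (∑_{d=1}^{n} 4^{d−1} d a_d² r^{d−1}) · (∑_{d=1}^{n} d² a_d² r^{d−1}) holds. -/
/-!
With the weights `w d = d a_d² r^{d-1} ≥ 0`, the inequality reads
`(∑ w f)(∑ w g) ≤ (∑ w)(∑ w f g)` for `f d = 4^{d-1}` and `g d = d`. Both are increasing in `d`,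
so this is the weighted Chebyshev sum inequality, whose defect is the nonnegative double sum
`½ ∑_{i,j} w_i w_j (f_i - f_j)(g_i - g_j)`.
-/

open Finset

variable {ι α : Type*}

lemma sum_sum_mul_sub_mul_sub_eq_two_mul [CommRing α] (s : Finset ι) (w f g : ι → α) :
    ∑ i ∈ s, ∑ j ∈ s, w i * w j * ((f i - f j) * (g i - g j)) =
      2 * ((∑ i ∈ s, w i) * ∑ i ∈ s, w i * f i * g i -
        (∑ i ∈ s, w i * f i) * ∑ i ∈ s, w i * g i) := by
  calc _ = ∑ i ∈ s, ∑ j ∈ s, (w i * f i * g i * w j + w i * (w j * f j * g j)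
          - w i * f i * (w j * g j) - w i * g i * (w j * f j)) :=
        sum_congr rfl fun i _ => sum_congr rfl fun j _ => by ring
    _ = (∑ i ∈ s, w i * f i * g i) * (∑ i ∈ s, w i) + (∑ i ∈ s, w i) * (∑ i ∈ s, w i * f i * g i)
          - (∑ i ∈ s, w i * f i) * (∑ i ∈ s, w i * g i)
          - (∑ i ∈ s, w i * g i) * (∑ i ∈ s, w i * f i) := by
        simp only [sum_add_distrib, sum_sub_distrib, sum_mul_sum]
    _ = _ := by ring

theorem MonovaryOn.sum_mul_sum_le_sum_mul_sum_of_nonneg [CommRing α] [LinearOrder α]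
    [IsStrictOrderedRing α] {s : Finset ι} {w f g : ι → α} (hfg : MonovaryOn f g s)
    (hw : ∀ i ∈ s, 0 ≤ w i) :
    (∑ i ∈ s, w i * f i) * (∑ i ∈ s, w i * g i) ≤ (∑ i ∈ s, w i) * ∑ i ∈ s, w i * f i * g i := by
  have h : 0 ≤ ∑ i ∈ s, ∑ j ∈ s, w i * w j * ((f i - f j) * (g i - g j)) :=
    sum_nonneg fun i hi => sum_nonneg fun j hj =>
      mul_nonneg (mul_nonneg (hw i hi) (hw j hj)) (hfg.sub_mul_sub_nonneg hj hi)
  rw [sum_sum_mul_sub_mul_sub_eq_two_mul] at h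
  linarith

lemma monotone_four_pow_pred : Monotone fun d : ℕ => (4 : ℝ) ^ (d - 1) :=
  fun _ _ hde => pow_le_pow_right₀ (by norm_num) (Nat.sub_le_sub_right hde 1)

theorem chebyshev_freq_ineq_general (n : ℕ) (a : ℕ → ℝ) (r : ℝ) (hr : 0 < r) :
    (∑ d ∈ Finset.Icc 1 n, (4 : ℝ) ^ (d - 1) * (d : ℝ) ^ 2 * (a d) ^ 2 * r ^ (d - 1)) *
      (∑ d ∈ Finset.Icc 1 n, (d : ℝ) * (a d) ^ 2 * r ^ (d - 1)) ≥
    (∑ d ∈ Finset.Icc 1 n, (4 : ℝ) ^ (d - 1) * (d : ℝ) * (a d) ^ 2 * r ^ (d - 1)) *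
      (∑ d ∈ Finset.Icc 1 n, (d : ℝ) ^ 2 * (a d) ^ 2 * r ^ (d - 1)) := by
  have hw : ∀ d ∈ Icc 1 n, 0 ≤ (d : ℝ) * a d ^ 2 * r ^ (d - 1) := fun d _ => by positivity
  have hcheb := ((monotone_four_pow_pred.monovary Nat.mono_cast).monovaryOn _
    ).sum_mul_sum_le_sum_mul_sum_of_nonneg hw
  calc _ = _ := by congr 1 <;> exact sum_congr rfl fun d _ => by ring
    _ ≤ _ := hcheb
    _ = _ := by rw [mul_comm]; congr 1; exact sum_congr rfl fun d _ => by ring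

/-- The key Chebyshev-type inequality (2.6) in the paper:
`(∑ 4^{d-1} d² a_d² r^{d-1}) (∑ d a_d² r^{d-1}) ≥ (∑ 4^{d-1} d a_d² r^{d-1}) (∑ d² a_d² r^{d-1})`. -/
theorem chebyshev_freq_ineq (n : ℕ) (hn : 1 ≤ n) (a : ℕ → ℝ) (r : ℝ) (hr : 0 < r) :
    (∑ d ∈ Finset.Icc 1 n, (4 : ℝ) ^ (d - 1) * (d : ℝ) ^ 2 * (a d) ^ 2 * r ^ (d - 1)) *
      (∑ d ∈ Finset.Icc 1 n, (d : ℝ) * (a d) ^ 2 * r ^ (d - 1)) ≥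
    (∑ d ∈ Finset.Icc 1 n, (4 : ℝ) ^ (d - 1) * (d : ℝ) * (a d) ^ 2 * r ^ (d - 1)) *
      (∑ d ∈ Finset.Icc 1 n, (d : ℝ) ^ 2 * (a d) ^ 2 * r ^ (d - 1)) :=
  chebyshev_freq_ineq_general n a r hr
end

section
/- There exists a universal constant C > 0 with the following property. For every natural number Λ ≥ 1, every choice of points z₁, …, z_Λ ∈ ℂ, and every r > 0, letting P(z) = ∏_{j=1}^{Λ} (z − z_j), the planar Lebesgue measure of the set { x ∈ B(0,1/2) : N_P(x,r) > 1/2 } is at most C·Λ²·r². -/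
/-!
Away from the roots put `S(x) = ∑ⱼ |x - zⱼ|⁻¹`. For `|w - x| = s` with `2 s S(x) ≤ 1` every
factor satisfies `e^{-2s/|x - zⱼ|} ≤ |w - zⱼ| / |x - zⱼ| ≤ e^{s/|x - zⱼ|}`, so on `B(x, 2r)` the
modulus `|P|` stays between `e^{-4r S(x)} |P(x)|` and `e^{2r S(x)} |P(x)|`, whence
`N_P(x, r) ≤ 12 r S(x) / log 2`: a large frequency forces `S(x) ≥ 1/(48 r)`.
Each `|x - z|⁻¹` is in weak `L²`: `∫_E |x - z|⁻¹ ≤ 2πρ + |E|/ρ` for every `ρ > 0` (polar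
coordinates on `B(z, ρ)`). Summing over the `Λ` roots, Chebyshev's inequality with `ρ = 2Λ/t`
gives `|{S ≥ t}| ≤ 8πΛ²/t²`.
-/

open MeasureTheory Metric

/-- The frequency function `N_F(x,r) = log₂( (⨍_{B(x,2r)} |F|²) / (⨍_{B(x,r)} |F|²) )`. -/
noncomputable def freq (F : ℂ → ℂ) (x : ℂ) (r : ℝ) : ℝ :=
  Real.logb 2 ((⨍ z in ball x (2 * r), ‖F z‖ ^ 2 ∂volume) /
    (⨍ z in ball x r, ‖F z‖ ^ 2 ∂volume))

open Set Real

theorem freq_le_two_mul_logb_of_norm_bounds {F : ℂ → ℂ} (hF : Continuous F) {x : ℂ}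
    {r a b : ℝ} (hr : 0 < r) (ha : 0 < a) (hlow : ∀ w ∈ ball x (2 * r), a ≤ ‖F w‖)
    (hup : ∀ w ∈ ball x (2 * r), ‖F w‖ ≤ b) :
    freq F x r ≤ 2 * Real.logb 2 (b / a) := by
  have hint : ∀ ρ, IntegrableOn (fun w => ‖F w‖ ^ 2) (ball x ρ) := fun ρ =>
    ((by fun_prop : Continuous fun w => ‖F w‖ ^ 2).continuousOn.integrableOn_compact
      (isCompact_closedBall x ρ)).mono_set ball_subset_closedBall
  have hpos : ∀ ρ, 0 < ρ → volume (ball x ρ) ≠ 0 := fun ρ hρ => (measure_ball_pos _ _ hρ).ne'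
  have hA_ge : ∀ ρ, 0 < ρ → ρ ≤ 2 * r → a ^ 2 ≤ ⨍ w in ball x ρ, ‖F w‖ ^ 2 := by
    intro ρ hρ hρr
    obtain ⟨w, hw, hA⟩ := exists_le_setAverage (hpos ρ hρ) measure_ball_lt_top.ne (hint ρ)
    exact (pow_le_pow_left₀ ha.le (hlow w (ball_subset_ball hρr hw)) 2).trans hA
  have hA₂_le : ⨍ w in ball x (2 * r), ‖F w‖ ^ 2 ≤ b ^ 2 := by
    obtain ⟨w, hw, hA⟩ := exists_setAverage_le (hpos (2 * r) (by linarith))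
      measure_ball_lt_top.ne (hint (2 * r))
    exact hA.trans (pow_le_pow_left₀ (norm_nonneg _) (hup w hw) 2)
  have ha2 : 0 < a ^ 2 := by positivity
  have hA₁ := hA_ge r hr (by linarith)
  have hA₂ := hA_ge (2 * r) (by linarith) le_rfl
  calc freq F x r ≤ Real.logb 2 (b ^ 2 / a ^ 2) :=
        Real.logb_le_logb_of_le one_lt_two (div_pos (ha2.trans_le hA₂) (ha2.trans_le hA₁))
          (div_le_div₀ (by positivity) hA₂_le ha2 hA₁)
    _ = 2 * Real.logb 2 (b / a) := by
        rw [← div_pow, Real.logb_pow]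
        push_cast
        ring

theorem Real.exp_neg_two_mul_le_one_sub {a : ℝ} (ha₀ : 0 ≤ a) (ha : a ≤ 1 / 2) :
    Real.exp (-(2 * a)) ≤ 1 - a := by
  rw [Real.exp_neg, inv_le_iff_one_le_mul₀ (Real.exp_pos _)]
  nlinarith [Real.add_one_le_exp (2 * a)]

section FactorBounds

variable {E : Type*} [SeminormedAddCommGroup E] {w x z : E}

theorem norm_sub_le_mul_exp (hxz : 0 < ‖x - z‖) :
    ‖w - z‖ ≤ ‖x - z‖ * Real.exp (‖w - x‖ / ‖x - z‖) := by
  calc ‖w - z‖ ≤ ‖w - x‖ + ‖x - z‖ := norm_sub_le_norm_sub_add_norm_sub w x z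
    _ = ‖x - z‖ * (‖w - x‖ / ‖x - z‖ + 1) := by field_simp
    _ ≤ ‖x - z‖ * Real.exp (‖w - x‖ / ‖x - z‖) := by gcongr; exact Real.add_one_le_exp _

theorem mul_exp_le_norm_sub (hxz : 0 < ‖x - z‖) (hw : 2 * ‖w - x‖ ≤ ‖x - z‖) :
    ‖x - z‖ * Real.exp (-(2 * ‖w - x‖ / ‖x - z‖)) ≤ ‖w - z‖ := by
  calc ‖x - z‖ * Real.exp (-(2 * ‖w - x‖ / ‖x - z‖))
      ≤ ‖x - z‖ * (1 - ‖w - x‖ / ‖x - z‖) := by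
        gcongr
        rw [mul_div_assoc]
        exact Real.exp_neg_two_mul_le_one_sub (by positivity) (by rw [div_le_iff₀ hxz]; linarith)
    _ = ‖x - z‖ - ‖w - x‖ := by field_simp
    _ ≤ ‖w - z‖ := by
        have := norm_sub_le_norm_sub_add_norm_sub x w z
        rw [norm_sub_rev x w] at this
        linarith

end FactorBounds

section ProductBounds

variable {ι 𝕜 : Type*} [Fintype ι] [NormedField 𝕜] {z : ι → 𝕜} {x : 𝕜}

theorem norm_prod_sub_le_mul_exp (hx : ∀ j, x ≠ z j) (w : 𝕜) :
    ‖∏ j, (w - z j)‖ ≤ ‖∏ j, (x - z j)‖ * Real.exp (‖w - x‖ * ∑ j, ‖x - z j‖⁻¹) := by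
  rw [norm_prod, norm_prod, Finset.mul_sum, Real.exp_sum, ← Finset.prod_mul_distrib]
  gcongr with j
  rw [← div_eq_mul_inv]
  exact norm_sub_le_mul_exp (norm_pos_iff.2 (sub_ne_zero.2 (hx j)))

theorem mul_exp_le_norm_prod_sub {w : 𝕜} (hx : ∀ j, x ≠ z j)
    (hw : 2 * ‖w - x‖ * ∑ j, ‖x - z j‖⁻¹ ≤ 1) :
    ‖∏ j, (x - z j)‖ * Real.exp (-(2 * ‖w - x‖ * ∑ j, ‖x - z j‖⁻¹)) ≤ ‖∏ j, (w - z j)‖ := by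
  rw [norm_prod, norm_prod, Finset.mul_sum, ← Finset.sum_neg_distrib, Real.exp_sum,
    ← Finset.prod_mul_distrib]
  gcongr with j
  have hxz : 0 < ‖x - z j‖ := norm_pos_iff.2 (sub_ne_zero.2 (hx j))
  have hj : ‖x - z j‖⁻¹ ≤ ∑ j, ‖x - z j‖⁻¹ :=
    Finset.single_le_sum (f := fun j => ‖x - z j‖⁻¹) (fun j _ => by positivity)
      (Finset.mem_univ j)
  rw [← div_eq_mul_inv]
  refine mul_exp_le_norm_sub hxz ?_
  have := mul_le_mul_of_nonneg_left hj (by positivity : (0 : ℝ) ≤ 2 * ‖w - x‖)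
  rw [← div_eq_mul_inv, div_le_iff₀ hxz] at this
  exact this.trans (mul_le_of_le_one_left hxz.le hw)

end ProductBounds

theorem freq_prod_sub_le_half {ι : Type*} [Fintype ι] {z : ι → ℂ} {x : ℂ} {r : ℝ}
    (hx : ∀ j, x ≠ z j) (hr : 0 < r) (hS : 48 * r * ∑ j, ‖x - z j‖⁻¹ ≤ 1) :
    freq (fun w => ∏ j, (w - z j)) x r ≤ 1 / 2 := by
  set S := ∑ j, ‖x - z j‖⁻¹
  set p := ‖∏ j, (x - z j)‖
  have hS₀ : 0 ≤ S := by positivity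
  have hp : 0 < p := norm_pos_iff.2 (Finset.prod_ne_zero_iff.2 fun j _ => sub_ne_zero.2 (hx j))
  have hnear : ∀ w ∈ ball x (2 * r), ‖w - x‖ ≤ 2 * r := fun w hw =>
    (mem_ball_iff_norm.1 hw).le
  have hup : ∀ w ∈ ball x (2 * r), ‖∏ j, (w - z j)‖ ≤ p * Real.exp (2 * r * S) := by
    intro w hw
    refine (norm_prod_sub_le_mul_exp hx w).trans ?_
    gcongr
    exact hnear w hw
  have hlow : ∀ w ∈ ball x (2 * r), p * Real.exp (-(2 * (2 * r) * S)) ≤ ‖∏ j, (w - z j)‖ := by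
    intro w hw
    have hwx := hnear w hw
    refine le_trans ?_ (mul_exp_le_norm_prod_sub hx ?_)
    · gcongr
    · nlinarith
  calc freq (fun w => ∏ j, (w - z j)) x r
      ≤ 2 * Real.logb 2 (p * Real.exp (2 * r * S) / (p * Real.exp (-(2 * (2 * r) * S)))) :=
        freq_le_two_mul_logb_of_norm_bounds (by fun_prop) hr (by positivity) hlow hup
    _ = 12 * r * S / Real.log 2 := by
        rw [mul_div_mul_left _ _ hp.ne', ← Real.exp_sub, Real.logb, Real.log_exp]
        ring
    _ ≤ 1 / 2 := by
        rw [div_le_iff₀ (Real.log_pos one_lt_two)]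
        linarith [Real.log_two_gt_d9]

theorem lintegral_ball_zero_inv_norm (ρ : ℝ) :
    ∫⁻ x in ball (0 : ℂ) ρ, ENNReal.ofReal ‖x‖⁻¹ = ENNReal.ofReal (2 * π * ρ) := by
  have hpolar : ∀ p ∈ polarCoord.target,
      ENNReal.ofReal p.1 • (ball (0 : ℂ) ρ).indicator (fun x => ENNReal.ofReal ‖x‖⁻¹)
        (Complex.polarCoord.symm p) = {p : ℝ × ℝ | p.1 < ρ}.indicator 1 p := by
    rintro ⟨s, θ⟩ ⟨hs, -⟩
    have hs : 0 < s := hs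
    have hnorm : ‖Complex.polarCoord.symm (s, θ)‖ = s := by
      rw [Complex.norm_polarCoord_symm, abs_of_pos hs]
    by_cases hsρ : s < ρ
    · have hmem : Complex.polarCoord.symm (s, θ) ∈ ball (0 : ℂ) ρ := by
        rwa [mem_ball_zero_iff, hnorm]
      rw [indicator_of_mem hmem, indicator_of_mem (show (s, θ) ∈ {p : ℝ × ℝ | p.1 < ρ} from hsρ),
        hnorm, smul_eq_mul, ← ENNReal.ofReal_mul hs.le, mul_inv_cancel₀ hs.ne',
        ENNReal.ofReal_one, Pi.one_apply]
    · have hmem : Complex.polarCoord.symm (s, θ) ∉ ball (0 : ℂ) ρ := by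
        rwa [mem_ball_zero_iff, hnorm]
      rw [indicator_of_notMem hmem,
        indicator_of_notMem (show (s, θ) ∉ {p : ℝ × ℝ | p.1 < ρ} from hsρ), smul_zero]
  have hregion : {p : ℝ × ℝ | p.1 < ρ} ∩ polarCoord.target = Ioo 0 ρ ×ˢ Ioo (-π) π := by
    ext ⟨s, θ⟩
    simp only [polarCoord_target, mem_inter_iff, mem_ofPred_eq, mem_prod, mem_Ioi, mem_Ioo]
    tauto
  have hlt : MeasurableSet {p : ℝ × ℝ | p.1 < ρ} := measurableSet_lt measurable_fst measurable_const
  rw [← lintegral_indicator measurableSet_ball, ← Complex.lintegral_comp_polarCoord_symm,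
    setLIntegral_congr_fun polarCoord.open_target.measurableSet hpolar,
    lintegral_indicator_one hlt, Measure.restrict_apply hlt, hregion, Measure.volume_eq_prod,
    Measure.prod_prod, Real.volume_Ioo, Real.volume_Ioo,
    ← ENNReal.ofReal_mul' (by linarith [pi_pos])]
  ring_nf

theorem lintegral_ball_inv_norm_sub (z : ℂ) (ρ : ℝ) :
    ∫⁻ x in ball z ρ, ENNReal.ofReal ‖x - z‖⁻¹ = ENNReal.ofReal (2 * π * ρ) := by
  have htranslate : (ball z ρ).indicator (fun x => ENNReal.ofReal ‖x - z‖⁻¹) =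
      fun x => (ball (0 : ℂ) ρ).indicator (fun y => ENNReal.ofReal ‖y‖⁻¹) (x - z) := by
    ext x
    by_cases hx : x ∈ ball z ρ
    · rw [indicator_of_mem hx, indicator_of_mem (by rwa [mem_ball_zero_iff, ← mem_ball_iff_norm])]
    · rw [indicator_of_notMem hx,
        indicator_of_notMem (by rwa [mem_ball_zero_iff, ← mem_ball_iff_norm])]
  rw [← lintegral_indicator measurableSet_ball, htranslate, lintegral_sub_right_eq_self,
    lintegral_indicator measurableSet_ball, lintegral_ball_zero_inv_norm]

theorem lintegral_inv_norm_sub_le (E : Set ℂ) (z : ℂ) {ρ : ℝ} (hρ : 0 < ρ) :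
    ∫⁻ x in E, ENNReal.ofReal ‖x - z‖⁻¹ ≤
      ENNReal.ofReal (2 * π * ρ) + ENNReal.ofReal ρ⁻¹ * volume E := by
  rw [← lintegral_inter_add_sdiff _ E (measurableSet_ball (x := z) (ε := ρ))]
  gcongr
  · exact (lintegral_mono_set inter_subset_right).trans (lintegral_ball_inv_norm_sub z ρ).le
  · calc ∫⁻ x in E \ ball z ρ, ENNReal.ofReal ‖x - z‖⁻¹
        ≤ ∫⁻ _ in E \ ball z ρ, ENNReal.ofReal ρ⁻¹ := by
          refine setLIntegral_mono measurable_const fun x hx => ?_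
          have hxz : ρ ≤ ‖x - z‖ := by simpa [mem_ball_iff_norm, dist_eq_norm] using hx.2
          exact ENNReal.ofReal_le_ofReal (inv_anti₀ hρ hxz)
      _ ≤ ENNReal.ofReal ρ⁻¹ * volume E := by
          rw [setLIntegral_const]
          exact mul_le_mul_right (measure_mono sdiff_subset) _

theorem volume_le_of_le_sum_inv_norm_sub {ι : Type*} [Fintype ι] (z : ι → ℂ) {E : Set ℂ}
    (hE : volume E ≠ ⊤) {t : ℝ} (ht : 0 < t) (hS : ∀ x ∈ E, t ≤ ∑ j, ‖x - z j‖⁻¹) :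
    volume E ≤ ENNReal.ofReal (8 * π * Fintype.card ι ^ 2 / t ^ 2) := by
  set n := Fintype.card ι
  have hmeas : ∀ j, Measurable fun x => ENNReal.ofReal ‖x - z j‖⁻¹ := fun j => by fun_prop
  have hchebyshev : ∀ ρ, 0 < ρ → ENNReal.ofReal t * volume E ≤
      n * (ENNReal.ofReal (2 * π * ρ) + ENNReal.ofReal ρ⁻¹ * volume E) := by
    intro ρ hρ
    calc ENNReal.ofReal t * volume E = ∫⁻ _ in E, ENNReal.ofReal t := (setLIntegral_const _ _).symm
      _ ≤ ∫⁻ x in E, ∑ j, ENNReal.ofReal ‖x - z j‖⁻¹ := by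
          refine setLIntegral_mono (Finset.measurable_sum _ fun j _ => hmeas j) fun x hx => ?_
          rw [← ENNReal.ofReal_sum_of_nonneg fun j _ => by positivity]
          exact ENNReal.ofReal_le_ofReal (hS x hx)
      _ = ∑ j, ∫⁻ x in E, ENNReal.ofReal ‖x - z j‖⁻¹ :=
          lintegral_finsetSum _ fun j _ => hmeas j
      _ ≤ ∑ _j : ι, (ENNReal.ofReal (2 * π * ρ) + ENNReal.ofReal ρ⁻¹ * volume E) :=
          Finset.sum_le_sum fun j _ => lintegral_inv_norm_sub_le E (z j) hρ
      _ = _ := by rw [Finset.sum_const, Finset.card_univ, nsmul_eq_mul]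
  set m := (volume E).toReal
  have hm : 0 ≤ m := ENNReal.toReal_nonneg
  have hreal : ∀ ρ, 0 < ρ → t * m ≤ n * (2 * π * ρ + ρ⁻¹ * m) := by
    intro ρ hρ
    have := hchebyshev ρ hρ
    rwa [← ENNReal.ofReal_toReal hE, ← ENNReal.ofReal_mul ht.le,
      ← ENNReal.ofReal_mul (by positivity), ← ENNReal.ofReal_add (by positivity) (by positivity),
      ← ENNReal.ofReal_natCast, ← ENNReal.ofReal_mul (by positivity),
      ENNReal.ofReal_le_ofReal_iff (by positivity)] at this
  rw [← ENNReal.ofReal_toReal hE]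
  refine ENNReal.ofReal_le_ofReal ?_
  rcases Nat.eq_zero_or_pos n with hn | hn
  · have htm : t * m ≤ 0 := by simpa [hn] using hreal 1 one_pos
    exact (by nlinarith : m ≤ 0).trans (by positivity)
  · have hn' : (0 : ℝ) < n := Nat.cast_pos.2 hn
    have := hreal (2 * n / t) (by positivity)
    rw [le_div_iff₀ (by positivity)]
    field_simp at this
    nlinarith

/-- Proposition 4.1: for a monic polynomial `P` of degree `Λ` with roots
`z₁,…,z_Λ`, the superlevel set `{N_P(·,r) > 1/2}` in the half disk has measure
at most `CΛ²r²`. -/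
theorem poly_freq_superlevel_volume :
    ∃ C > (0 : ℝ), ∀ (Λ : ℕ), 1 ≤ Λ → ∀ (z : Fin Λ → ℂ) (r : ℝ), 0 < r →
      volume {x : ℂ | x ∈ ball (0 : ℂ) (1 / 2) ∧
          freq (fun w => ∏ j, (w - z j)) x r > 1 / 2} ≤
        ENNReal.ofReal (C * (Λ : ℝ) ^ 2 * r ^ 2) := by
  refine ⟨18432 * π, by positivity, fun Λ _ z r hr => ?_⟩
  set E := ball (0 : ℂ) (1 / 2) ∩ {x | 1 / (48 * r) ≤ ∑ j, ‖x - z j‖⁻¹}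
  -- At a root the sum is junk (`0⁻¹ = 0`), so the finitely many roots are set aside.
  have hsub : {x : ℂ | x ∈ ball (0 : ℂ) (1 / 2) ∧
      freq (fun w => ∏ j, (w - z j)) x r > 1 / 2} ⊆ range z ∪ E := by
    rintro x ⟨hx, hfreq⟩
    by_cases hroot : x ∈ range z
    · exact Or.inl hroot
    refine Or.inr ⟨hx, ?_⟩
    rw [mem_ofPred_eq]
    refine le_of_not_gt fun hS => hfreq.not_ge ?_
    rw [lt_div_iff₀ (by positivity)] at hS
    exact freq_prod_sub_le_half (fun j h => hroot ⟨j, h.symm⟩) hr (by linarith)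
  have hE : volume E ≠ ⊤ := (measure_mono inter_subset_left).trans_lt measure_ball_lt_top |>.ne
  calc volume {x : ℂ | x ∈ ball (0 : ℂ) (1 / 2) ∧ freq (fun w => ∏ j, (w - z j)) x r > 1 / 2}
      ≤ volume (range z ∪ E) := measure_mono hsub
    _ ≤ volume (range z) + volume E := measure_union_le _ _
    _ = volume E := by rw [(finite_range z).measure_zero, zero_add]
    _ ≤ ENNReal.ofReal (8 * π * Fintype.card (Fin Λ) ^ 2 / (1 / (48 * r)) ^ 2) :=
        volume_le_of_le_sum_inv_norm_sub z hE (by positivity) fun x hx => hx.2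
    _ = ENNReal.ofReal (18432 * π * Λ ^ 2 * r ^ 2) := by
        rw [Fintype.card_fin]
        congr 1
        field_simp
        ring
end

section
/- There exists a universal constant C > 0 with the following property. For every natural number Λ ≥ 1, every choice of points z₁, …, z_Λ ∈ ℂ, and every r > 0, letting P(z) = ∏_{j=1}^{Λ} (z − z_j), the planar Lebesgue measure of the set { z₀ ∈ B(0,1/2) : sup_{w ∈ B(z₀,2r)} |P(w)|² > 2^{1/2} · inf_{z ∈ B(z₀,r)} |P(z)|² } is at most C·Λ²·r². -/
/-!
Write `d_j = ‖z₀ - z_j‖`. If every `d_j ≥ 2r`, then `|P| ≤ ∏ (d_j + 2r)` on `B(z₀, 2r)` and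
`|P| ≥ ∏ (d_j - r)` on `B(z₀, r)`, and `(d + 2r)/(d - r) ≤ exp (6r/d)`, so the doubling ratio of
`|P|²` is at most `exp (12 r ∑ 1/d_j)`, which is `≤ √2` once `∑ 1/d_j ≤ 1/(40r)`.
So a bad `z₀` lies within `2r` of a root (total area `≤ 4πΛr²`), or `∑ 1/d_j > 1/(40r)`.
The roots with `d_j > δ = 80Λr` contribute at most `Λ/δ = 1/(80r)` to that sum, so in the second
case the truncated potential `∑_{d_j ≤ δ} 1/d_j` is at least `1/(80r)`. Since
`∫_{|w| ≤ δ} dw/|w| = 2πδ`, Markov's inequality bounds the area of that set by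
`2πδΛ · 80r = 12800πΛ²r²`.
-/

open MeasureTheory Metric Set Real Finset

lemma add_two_mul_le_exp_mul_sub {d r : ℝ} (hr : 0 < r) (hd : 2 * r ≤ d) :
    d + 2 * r ≤ exp (6 * r * d⁻¹) * (d - r) := by
  have hd₀ : 0 < d := by linarith
  calc d + 2 * r ≤ (6 * r * d⁻¹ + 1) * (d - r) := by
        rw [← sub_nonneg]
        have : (6 * r * d⁻¹ + 1) * (d - r) - (d + 2 * r) = 3 * r * (d - 2 * r) / d := by
          field_simp; ring
        rw [this]; exact div_nonneg (by nlinarith) hd₀.le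
    _ ≤ exp (6 * r * d⁻¹) * (d - r) :=
        mul_le_mul_of_nonneg_right (add_one_le_exp _) (by linarith)

lemma prod_add_le_exp_mul_prod_sub {ι : Type*} {s : Finset ι} {d : ι → ℝ} {r : ℝ} (hr : 0 < r)
    (hd : ∀ j ∈ s, 2 * r ≤ d j) :
    ∏ j ∈ s, (d j + 2 * r) ≤ exp (6 * r * ∑ j ∈ s, (d j)⁻¹) * ∏ j ∈ s, (d j - r) := by
  rw [mul_sum, exp_sum, ← prod_mul_distrib]
  exact prod_le_prod (fun j hj => by linarith [hd j hj])
    fun j hj => add_two_mul_le_exp_mul_sub hr (hd j hj)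

section DoublingRatio

variable {𝕜 ι : Type*} [NormedField 𝕜] [Fintype ι] (z : ι → 𝕜) {z₀ w : 𝕜} {ρ : ℝ}

lemma norm_prod_sub_le_of_mem_ball (hw : w ∈ ball z₀ ρ) :
    ‖∏ j, (w - z j)‖ ≤ ∏ j, (‖z₀ - z j‖ + ρ) := by
  rw [norm_prod]
  refine prod_le_prod (fun j _ => norm_nonneg _) fun j _ => ?_
  have := norm_sub_le_norm_sub_add_norm_sub w z₀ (z j)
  rw [← dist_eq_norm w z₀] at this
  linarith [mem_ball.1 hw]

lemma prod_sub_le_norm_prod_of_mem_ball (hw : w ∈ ball z₀ ρ) (hρ : ∀ j, ρ ≤ ‖z₀ - z j‖) :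
    ∏ j, (‖z₀ - z j‖ - ρ) ≤ ‖∏ j, (w - z j)‖ := by
  rw [norm_prod]
  refine prod_le_prod (fun j _ => sub_nonneg.2 (hρ j)) fun j _ => ?_
  have := norm_sub_le_norm_sub_add_norm_sub z₀ w (z j)
  rw [← dist_eq_norm z₀ w, dist_comm] at this
  linarith [mem_ball.1 hw]

lemma sSup_le_exp_mul_sInf {r : ℝ} (hr : 0 < r) (hd : ∀ j, 2 * r ≤ ‖z₀ - z j‖) :
    sSup ((fun w => ‖∏ j, (w - z j)‖ ^ 2) '' ball z₀ (2 * r)) ≤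
      exp (12 * r * ∑ j, ‖z₀ - z j‖⁻¹) *
        sInf ((fun w => ‖∏ j, (w - z j)‖ ^ 2) '' ball z₀ r) := by
  set A := ∏ j, (‖z₀ - z j‖ + 2 * r)
  set B := ∏ j, (‖z₀ - z j‖ - r)
  set S := ∑ j, ‖z₀ - z j‖⁻¹
  have hA : 0 ≤ A := prod_nonneg fun j _ => by linarith [hd j]
  have hB : 0 ≤ B := prod_nonneg fun j _ => by linarith [hd j]
  have h_sup : sSup ((fun w => ‖∏ j, (w - z j)‖ ^ 2) '' ball z₀ (2 * r)) ≤ A ^ 2 :=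
    csSup_le ((nonempty_ball.2 (by positivity)).image _) <| forall_mem_image.2 fun w hw =>
      pow_le_pow_left₀ (norm_nonneg _) (norm_prod_sub_le_of_mem_ball z hw) 2
  have h_inf : B ^ 2 ≤ sInf ((fun w => ‖∏ j, (w - z j)‖ ^ 2) '' ball z₀ r) :=
    le_csInf ((nonempty_ball.2 hr).image _) <| forall_mem_image.2 fun w hw =>
      pow_le_pow_left₀ hB (prod_sub_le_norm_prod_of_mem_ball z hw fun j => by linarith [hd j]) 2
  calc _ ≤ A ^ 2 := h_sup
    _ ≤ (exp (6 * r * S) * B) ^ 2 :=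
        pow_le_pow_left₀ hA (prod_add_le_exp_mul_prod_sub hr fun j _ => hd j) 2
    _ = exp (12 * r * S) * B ^ 2 := by rw [mul_pow, ← exp_nat_mul]; ring_nf
    _ ≤ _ := by gcongr

end DoublingRatio

noncomputable def truncInv (δ t : ℝ) : ℝ := (Iic δ).indicator (·⁻¹) t

lemma truncInv_nonneg (δ : ℝ) {t : ℝ} (ht : 0 ≤ t) : 0 ≤ truncInv δ t :=
  indicator_nonneg (fun _ _ => inv_nonneg.2 ht) t

lemma inv_le_truncInv_add_inv {δ : ℝ} (hδ : 0 < δ) (t : ℝ) : t⁻¹ ≤ truncInv δ t + δ⁻¹ := by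
  by_cases htδ : t ≤ δ
  · simp [truncInv, htδ, hδ.le]
  · simpa [truncInv, htδ] using inv_anti₀ hδ (not_le.1 htδ).le

lemma measurable_truncInv (δ : ℝ) : Measurable (truncInv δ) :=
  measurable_inv.indicator measurableSet_Iic

lemma lintegral_truncInv_norm {δ : ℝ} (hδ : 0 ≤ δ) :
    ∫⁻ w : ℂ, ENNReal.ofReal (truncInv δ ‖w‖) = ENNReal.ofReal (2 * π * δ) := by
  have h_polar : ∀ p ∈ polarCoord.target,
      ENNReal.ofReal p.1 • ENNReal.ofReal (truncInv δ ‖Complex.polarCoord.symm p‖) =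
        (Iic δ ×ˢ univ).indicator 1 p := by
    rintro ⟨ρ, θ⟩ ⟨hρ, -⟩
    have hρ : 0 < ρ := hρ
    by_cases hρδ : ρ ≤ δ
    · simp [truncInv, abs_of_pos hρ, hρδ, ← ENNReal.ofReal_mul hρ.le, hρ.ne']
    · simp [truncInv, abs_of_pos hρ, hρδ]
  have h_region : Iic δ ×ˢ univ ∩ polarCoord.target = Ioc 0 δ ×ˢ Ioo (-π) π := by
    ext ⟨ρ, θ⟩
    simp only [polarCoord_target, Set.mem_inter_iff, Set.mem_prod, Set.mem_Iic, Set.mem_univ,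
      Set.mem_Ioi, Set.mem_Ioc, Set.mem_Ioo]
    tauto
  rw [← Complex.lintegral_comp_polarCoord_symm,
    setLIntegral_congr_fun polarCoord.open_target.measurableSet h_polar,
    lintegral_indicator_one (measurableSet_Iic.prod MeasurableSet.univ),
    Measure.restrict_apply (measurableSet_Iic.prod MeasurableSet.univ), h_region,
    Measure.volume_eq_prod, Measure.prod_prod, Real.volume_Ioc, Real.volume_Ioo,
    ← ENNReal.ofReal_mul (by linarith)]
  ring_nf

lemma volume_setOf_le_sum_truncInv_le {ι : Type*} [Fintype ι] (z : ι → ℂ) {δ ε : ℝ} (hδ : 0 ≤ δ)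
    (hε : 0 < ε) :
    volume {w : ℂ | ε ≤ ∑ j, truncInv δ ‖w - z j‖} ≤
      ENNReal.ofReal (2 * π * δ * Fintype.card ι / ε) := by
  have h_meas : ∀ j, Measurable fun w : ℂ => ENNReal.ofReal (truncInv δ ‖w - z j‖) := fun j =>
    ((measurable_truncInv δ).comp (measurable_id.sub_const _).norm).ennreal_ofReal
  calc volume {w : ℂ | ε ≤ ∑ j, truncInv δ ‖w - z j‖}
      ≤ volume {w : ℂ | ENNReal.ofReal ε ≤ ∑ j, ENNReal.ofReal (truncInv δ ‖w - z j‖)} := by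
        refine measure_mono fun w hw => ?_
        rw [Set.mem_ofPred_eq,
          ← ENNReal.ofReal_sum_of_nonneg fun j _ => truncInv_nonneg δ (norm_nonneg _)]
        exact ENNReal.ofReal_le_ofReal hw
    _ ≤ (∫⁻ w, ∑ j, ENNReal.ofReal (truncInv δ ‖w - z j‖)) / ENNReal.ofReal ε :=
        meas_ge_le_lintegral_div (Finset.measurable_sum _ fun j _ => h_meas j).aemeasurable
          (by simpa using hε) ENNReal.ofReal_ne_top
    _ = ENNReal.ofReal (2 * π * δ * Fintype.card ι / ε) := by
        simp only [lintegral_finsetSum _ fun j _ => h_meas j, lintegral_sub_right_eq_self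
          (fun w : ℂ => ENNReal.ofReal (truncInv δ ‖w‖)), lintegral_truncInv_norm hδ, sum_const,
          card_univ, nsmul_eq_mul]
        rw [ENNReal.ofReal_div_of_pos hε, ← ENNReal.ofReal_natCast,
          ← ENNReal.ofReal_mul (by positivity), mul_comm]

lemma exp_le_two_rpow_half {x : ℝ} (hx : x ≤ 3 / 10) : exp x ≤ (2 : ℝ) ^ ((1 : ℝ) / 2) := by
  rw [rpow_def_of_pos two_pos, exp_le_exp]
  linarith [log_two_gt_d9]

lemma doubling_le_of_sum_truncInv_le {𝕜 ι : Type*} [NormedField 𝕜] [Fintype ι] (z : ι → 𝕜)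
    {z₀ : 𝕜} {r δ : ℝ} (hr : 0 < r) (hδ : 0 < δ) (hδr : Fintype.card ι * δ⁻¹ ≤ (80 * r)⁻¹)
    (hd : ∀ j, 2 * r ≤ ‖z₀ - z j‖) (hG : ∑ j, truncInv δ ‖z₀ - z j‖ ≤ (80 * r)⁻¹) :
    sSup ((fun w => ‖∏ j, (w - z j)‖ ^ 2) '' ball z₀ (2 * r)) ≤
      (2 : ℝ) ^ ((1 : ℝ) / 2) * sInf ((fun w => ‖∏ j, (w - z j)‖ ^ 2) '' ball z₀ r) := by
  have h_sum : ∑ j, ‖z₀ - z j‖⁻¹ ≤ (40 * r)⁻¹ :=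
    calc ∑ j, ‖z₀ - z j‖⁻¹ ≤ ∑ j, (truncInv δ ‖z₀ - z j‖ + δ⁻¹) :=
          sum_le_sum fun j _ => inv_le_truncInv_add_inv hδ _
      _ = ∑ j, truncInv δ ‖z₀ - z j‖ + Fintype.card ι * δ⁻¹ := by
          rw [sum_add_distrib, sum_const, card_univ, nsmul_eq_mul]
      _ ≤ (80 * r)⁻¹ + (80 * r)⁻¹ := add_le_add hG hδr
      _ = (40 * r)⁻¹ := by field_simp; norm_num
  have h_exp : exp (12 * r * ∑ j, ‖z₀ - z j‖⁻¹) ≤ (2 : ℝ) ^ ((1 : ℝ) / 2) := by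
    refine exp_le_two_rpow_half ?_
    calc 12 * r * ∑ j, ‖z₀ - z j‖⁻¹ ≤ 12 * r * (40 * r)⁻¹ := by gcongr
      _ = 3 / 10 := by field_simp; norm_num
  refine (sSup_le_exp_mul_sInf z hr hd).trans (mul_le_mul_of_nonneg_right h_exp ?_)
  exact Real.sInf_nonneg (forall_mem_image.2 fun w _ => by positivity)

lemma volume_iUnion_closedBall_le {ι : Type*} [Fintype ι] (z : ι → ℂ) {ρ : ℝ} (hρ : 0 ≤ ρ) :
    volume (⋃ j, closedBall (z j) ρ) ≤ ENNReal.ofReal (Fintype.card ι * π * ρ ^ 2) := by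
  refine (measure_iUnion_fintype_le _ _).trans_eq ?_
  simp only [Complex.volume_closedBall, sum_const, card_univ, nsmul_eq_mul]
  rw [← ENNReal.ofReal_pow hρ, ← ENNReal.ofReal_coe_nnreal, NNReal.coe_real_pi,
    ← ENNReal.ofReal_natCast, ← ENNReal.ofReal_mul (by positivity),
    ← ENNReal.ofReal_mul (by positivity)]
  ring_nf

lemma setOf_doubling_gt_subset {𝕜 ι : Type*} [NormedField 𝕜] [Fintype ι] (z : ι → 𝕜)
    {r δ : ℝ} (hr : 0 < r) (hδ : 0 < δ) (hδr : Fintype.card ι * δ⁻¹ ≤ (80 * r)⁻¹) :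
    {z₀ : 𝕜 | sSup ((fun w => ‖∏ j, (w - z j)‖ ^ 2) '' ball z₀ (2 * r)) >
        (2 : ℝ) ^ ((1 : ℝ) / 2) * sInf ((fun w => ‖∏ j, (w - z j)‖ ^ 2) '' ball z₀ r)} ⊆
      (⋃ j, closedBall (z j) (2 * r)) ∪ {w | (80 * r)⁻¹ ≤ ∑ j, truncInv δ ‖w - z j‖} := by
  intro z₀ h_bad
  by_contra h_good
  simp only [mem_union, mem_iUnion, mem_closedBall, dist_eq_norm, Set.mem_ofPred_eq, not_or,
    not_exists, not_le] at h_good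
  exact h_bad.not_ge <|
    doubling_le_of_sum_truncInv_le z hr hδ hδr (fun j => (h_good.1 j).le) h_good.2.le

lemma volume_setOf_doubling_gt_le {ι : Type*} [Fintype ι] [Nonempty ι] (z : ι → ℂ) {r : ℝ}
    (hr : 0 < r) :
    volume {z₀ : ℂ | sSup ((fun w => ‖∏ j, (w - z j)‖ ^ 2) '' ball z₀ (2 * r)) >
        (2 : ℝ) ^ ((1 : ℝ) / 2) * sInf ((fun w => ‖∏ j, (w - z j)‖ ^ 2) '' ball z₀ r)} ≤
      ENNReal.ofReal (13000 * π * (Fintype.card ι : ℝ) ^ 2 * r ^ 2) := by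
  set n : ℝ := (Fintype.card ι : ℝ)
  have hn : 1 ≤ n := Nat.one_le_cast.2 Fintype.card_pos
  set δ : ℝ := 80 * n * r
  have hδ : 0 < δ := by positivity
  have hδr : n * δ⁻¹ ≤ (80 * r)⁻¹ := le_of_eq (by simp only [δ]; field_simp)
  calc _ ≤ volume (⋃ j, closedBall (z j) (2 * r)) +
        volume {w | (80 * r)⁻¹ ≤ ∑ j, truncInv δ ‖w - z j‖} :=
        (measure_mono (setOf_doubling_gt_subset z hr hδ hδr)).trans (measure_union_le _ _)
    _ ≤ ENNReal.ofReal (n * π * (2 * r) ^ 2) + ENNReal.ofReal (2 * π * δ * n / (80 * r)⁻¹) :=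
        add_le_add (volume_iUnion_closedBall_le z (by positivity))
          (volume_setOf_le_sum_truncInv_le z hδ.le (by positivity))
    _ ≤ ENNReal.ofReal (13000 * π * n ^ 2 * r ^ 2) := by
        rw [← ENNReal.ofReal_add (by positivity) (by positivity)]
        refine ENNReal.ofReal_le_ofReal ?_
        have hn_sq : n * (π * r ^ 2) ≤ n ^ 2 * (π * r ^ 2) := by gcongr; nlinarith
        have h_pos : 0 ≤ n ^ 2 * (π * r ^ 2) := by positivity
        simp only [δ, div_inv_eq_mul]
        linarith

/-- Corollary 4.2: the `L^∞`-based doubling quantity of a monic polynomial of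
degree `Λ` exceeds `2^{1/2}` (i.e. its `log₂` exceeds `1/2`) only on a subset of
the half disk of measure at most `CΛ²r²`. -/
theorem poly_sup_inf_superlevel_volume :
    ∃ C > (0 : ℝ), ∀ (Λ : ℕ), 1 ≤ Λ → ∀ (z : Fin Λ → ℂ) (r : ℝ), 0 < r →
      volume {z₀ : ℂ | z₀ ∈ ball (0 : ℂ) (1 / 2) ∧
          sSup ((fun w => ‖∏ j, (w - z j)‖ ^ 2) '' ball z₀ (2 * r)) >
            (2 : ℝ) ^ ((1 : ℝ) / 2) *
              sInf ((fun w => ‖∏ j, (w - z j)‖ ^ 2) '' ball z₀ r)} ≤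
        ENNReal.ofReal (C * (Λ : ℝ) ^ 2 * r ^ 2) := by
  refine ⟨13000 * π, by positivity, fun Λ hΛ z r hr => ?_⟩
  have : Nonempty (Fin Λ) := ⟨⟨0, hΛ⟩⟩
  rw [ofPred_and]
  refine (measure_mono inter_subset_right).trans ?_
  simpa only [Fintype.card_fin] using volume_setOf_doubling_gt_le z hr
end

section
/- There exists a universal constant C > 0 with the following property. Let Λ ≥ 1 be a natural number, z₁, …, z_Λ ∈ ℂ, P(z) = ∏_{j=1}^{Λ}(z − z_j), let r > 0, and let z₀ ∈ ℂ satisfy |z₀ − z_j| ≥ 4r for every j. Then log₂( sup_{w ∈ B(z₀,2r)} |P(w)|² / inf_{z ∈ B(z₀,r)} |P(z)|² ) ≤ C · ∑_{j=1}^{Λ} r / |z₀ − z_j|. -/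
/-!
On `B(z₀, 2r)` each factor satisfies `|w - zⱼ| ≤ dⱼ + 2r`, and on `B(z₀, r)` it satisfies
`|z - zⱼ| ≥ dⱼ - r`, where `dⱼ = |z₀ - zⱼ| ≥ 4r`. Hence the ratio of the supremum to the infimum
is at most `∏ⱼ ((dⱼ + 2r)/(dⱼ - r))²`, and `log ((d + 2r)/(d - r)) ≤ 3r/(d - r) ≤ 4r/d`, so one
can take `C = 8 / log 2`.
-/

open Metric

section NormedField

variable {𝕜 ι : Type*} [NormedField 𝕜] (s : Finset ι) (z : ι → 𝕜) {z₀ w : 𝕜} {ρ : ℝ}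

theorem norm_prod_sub_le_of_dist_le (hw : dist w z₀ ≤ ρ) :
    ‖∏ j ∈ s, (w - z j)‖ ≤ ∏ j ∈ s, (‖z₀ - z j‖ + ρ) := by
  rw [norm_prod]
  refine Finset.prod_le_prod (fun _ _ => norm_nonneg _) fun j _ => ?_
  calc ‖w - z j‖ ≤ ‖w - z₀‖ + ‖z₀ - z j‖ := norm_sub_le_norm_sub_add_norm_sub _ _ _
    _ ≤ ‖z₀ - z j‖ + ρ := by rw [← dist_eq_norm w z₀]; linarith

theorem prod_sub_le_norm_prod_sub_of_dist_le (hw : dist w z₀ ≤ ρ)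
    (hρ : ∀ j ∈ s, ρ ≤ ‖z₀ - z j‖) :
    ∏ j ∈ s, (‖z₀ - z j‖ - ρ) ≤ ‖∏ j ∈ s, (w - z j)‖ := by
  rw [norm_prod]
  refine Finset.prod_le_prod (fun j hj => sub_nonneg.2 (hρ j hj)) fun j _ => ?_
  calc ‖z₀ - z j‖ - ρ ≤ ‖z₀ - z j‖ - ‖z₀ - w‖ := by rw [← dist_eq_norm z₀ w, dist_comm]; linarith
    _ ≤ ‖w - z j‖ := by linarith [norm_sub_le_norm_sub_add_norm_sub z₀ w (z j)]

end NormedField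

theorem Real.log_sSup_image_div_sInf_image_le {α : Type*} {f : α → ℝ} {A B : Set α} {M m : ℝ}
    (hB : B.Nonempty) (hBA : B ⊆ A) (hm : 0 < m) (hfM : ∀ x ∈ A, f x ≤ M)
    (hfm : ∀ x ∈ B, m ≤ f x) :
    Real.log (sSup (f '' A) / sInf (f '' B)) ≤ Real.log (M / m) := by
  have hsup_le : sSup (f '' A) ≤ M :=
    csSup_le ((hB.mono hBA).image f) (Set.forall_mem_image.2 hfM)
  have hinf_ge : m ≤ sInf (f '' B) := le_csInf (hB.image f) (Set.forall_mem_image.2 hfm)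
  obtain ⟨b, hb⟩ := hB
  have hsup_pos : 0 < sSup (f '' A) :=
    calc 0 < f b := hm.trans_le (hfm b hb)
      _ ≤ sSup (f '' A) := le_csSup ⟨M, Set.forall_mem_image.2 hfM⟩ ⟨b, hBA hb, rfl⟩
  refine Real.log_le_log (div_pos hsup_pos (hm.trans_le hinf_ge)) ?_
  exact div_le_div₀ (hsup_pos.le.trans hsup_le) hsup_le hm hinf_ge

theorem Real.log_add_two_mul_div_sub_le {d r : ℝ} (hr : 0 < r) (hd : 4 * r ≤ d) :
    Real.log ((d + 2 * r) / (d - r)) ≤ 4 * (r / d) := by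
  have hdr : 0 < d - r := by linarith
  calc Real.log ((d + 2 * r) / (d - r)) ≤ (d + 2 * r) / (d - r) - 1 :=
        Real.log_le_sub_one_of_pos (div_pos (by linarith) hdr)
    _ = 3 * r / (d - r) := by field_simp; ring
    _ ≤ 4 * r / d := by rw [div_le_div_iff₀ hdr (by linarith)]; nlinarith
    _ = 4 * (r / d) := mul_div_assoc _ _ _

/-- The pointwise estimate from the proof of Proposition 4.1: if `z₀` is at
distance at least `4r` from every root of the monic polynomial `P`, then the
`L^∞`-based doubling quantity of `P` at `z₀` is bounded by `C ∑ⱼ r/|z₀ − zⱼ|`. -/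
theorem poly_doubling_pointwise_bound :
    ∃ C > (0 : ℝ), ∀ (Λ : ℕ), 1 ≤ Λ → ∀ (z : Fin Λ → ℂ) (r : ℝ), 0 < r →
      ∀ z₀ : ℂ, (∀ j, 4 * r ≤ ‖z₀ - z j‖) →
      Real.logb 2
          (sSup ((fun w => ‖∏ j, (w - z j)‖ ^ 2) '' ball z₀ (2 * r)) /
            sInf ((fun w => ‖∏ j, (w - z j)‖ ^ 2) '' ball z₀ r)) ≤
        C * ∑ j, r / ‖z₀ - z j‖ := by
  refine ⟨8 / Real.log 2, by positivity, fun Λ _ z r hr z₀ hd => ?_⟩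
  have hdr : ∀ j ∈ Finset.univ, 0 < ‖z₀ - z j‖ - r := fun j _ => by linarith [hd j]
  have hupper : ∀ w ∈ ball z₀ (2 * r),
      ‖∏ j, (w - z j)‖ ^ 2 ≤ (∏ j, (‖z₀ - z j‖ + 2 * r)) ^ 2 := fun w hw =>
    pow_le_pow_left₀ (norm_nonneg _) (norm_prod_sub_le_of_dist_le _ z (mem_ball.1 hw).le) 2
  have hlower : ∀ w ∈ ball z₀ r,
      (∏ j, (‖z₀ - z j‖ - r)) ^ 2 ≤ ‖∏ j, (w - z j)‖ ^ 2 := fun w hw =>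
    pow_le_pow_left₀ (Finset.prod_nonneg fun j hj => (hdr j hj).le)
      (prod_sub_le_norm_prod_sub_of_dist_le _ z (mem_ball.1 hw).le fun j hj => by
        linarith [hdr j hj]) 2
  have hlog : Real.log ((∏ j, (‖z₀ - z j‖ + 2 * r)) ^ 2 / (∏ j, (‖z₀ - z j‖ - r)) ^ 2) ≤
      8 * ∑ j, r / ‖z₀ - z j‖ := by
    rw [← div_pow, ← Finset.prod_div_distrib, Real.log_pow,
      Real.log_prod fun j hj => (div_pos (by linarith [hdr j hj]) (hdr j hj)).ne',
      Finset.mul_sum, Finset.mul_sum]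
    push_cast
    exact Finset.sum_le_sum fun j _ => by linarith [Real.log_add_two_mul_div_sub_le hr (hd j)]
  rw [Real.logb, div_mul_eq_mul_div, div_le_div_iff_of_pos_right (Real.log_pos one_lt_two)]
  exact (Real.log_sSup_image_div_sInf_image_le (nonempty_ball.2 hr)
    (ball_subset_ball (by linarith)) (pow_pos (Finset.prod_pos hdr) 2) hupper hlower).trans hlog
end

section
/- For every δ ∈ (0,1] there exists a constant C > 0, depending only on δ, with the following property. For every integer n ≥ 1, every monic polynomial P of degree n, and every a > 0, there exists a finite collection of balls B(x₁,r₁), …, B(x_k,r_k) whose union contains the set { z ∈ B(0,1) : |P(z)| < e^{−a} } and such that ∑_{j=1}^{k} r_j^δ ≤ C·e^{−a·δ/n}. -/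
/-!
Cartan's argument. For `n` points and `λ_m = h (m/n)^{1/δ}`, greedily take the largest `p` such that
some disk of radius `λ_p` contains at least `p` of the points (it then contains exactly `p`), remove
those points and repeat. Outside the disks of doubled radii, every disk `B(z, λ_m)` contains fewer
than `m` points, so the `m`-th closest point to `z` is at distance `≥ λ_m` and
`∏ |z - w| ≥ ∏ λ_m = h^n (n!/n^n)^{1/δ} ≥ (h e^{-1/δ})^n`. The chosen disks have radii `2 λ_{p_j}`
with `∑ p_j = n`, hence `∑ (2 λ_{p_j})^δ = (2h)^δ`. For a monic `P` the points are its roots and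
`h = e^{1/δ - a/n}`.
-/

open Metric Real

section Sparse

open Multiset

variable {α : Type*} [PseudoMetricSpace α]

def IsSparseAt (lam : ℕ → ℝ) (s : Multiset α) (z : α) : Prop :=
  ∀ m, 0 < m → s.countP (fun w => dist z w < lam m) < m

lemma IsSparseAt.mono {lam : ℕ → ℝ} {s t : Multiset α} {z : α} (hs : IsSparseAt lam s z)
    (hts : t ≤ s) : IsSparseAt lam t z :=
  fun m hm => (countP_le_of_le _ hts).trans_lt (hs m hm)

lemma monotone_countP_dist_lt (s : Multiset α) (y : α) :
    Monotone fun r : ℝ => s.countP (fun w => dist y w < r) := by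
  intro r r' h
  simp only [countP_eq_card_filter]
  exact card_le_card (monotone_filter_right s fun w hw => hw.trans_le h)

lemma exists_maximal_cluster {lam : ℕ → ℝ} (hlam : Monotone lam) (hlam1 : 0 < lam 1)
    {s : Multiset α} (hs : s ≠ 0) :
    ∃ p x, 0 < p ∧ s.countP (fun w => dist x w < lam p) = p ∧
      ∀ q, p < q → ∀ y, s.countP (fun w => dist y w < lam q) < q := by
  classical
  let Crowded : ℕ → Prop := fun q => ∃ y, q ≤ s.countP (fun w => dist y w < lam q)
  obtain ⟨w, hw⟩ := exists_mem_of_ne_zero hs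
  have hcard : 1 ≤ card s := card_pos.2 hs
  have hcrowded : Crowded 1 := ⟨w, countP_pos.2 ⟨w, hw, by simpa using hlam1⟩⟩
  set p := Nat.findGreatest Crowded (card s)
  have hmax : ∀ q, p < q → ∀ y, s.countP (fun w => dist y w < lam q) < q := by
    intro q hpq y
    by_contra! hq
    rcases le_or_gt q (card s) with hqs | hqs
    · exact Nat.findGreatest_is_greatest hpq hqs ⟨y, hq⟩
    · exact (hq.trans (countP_le_card _ _)).not_gt hqs
  obtain ⟨x, hx⟩ : Crowded p := Nat.findGreatest_spec hcard hcrowded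
  refine ⟨p, x, Nat.le_findGreatest hcard hcrowded, le_antisymm ?_ hx, hmax⟩
  by_contra! hlt
  exact (hmax _ hlt x).not_ge (monotone_countP_dist_lt s x (hlam hlt.le))

lemma IsSparseAt.of_filter_far {lam : ℕ → ℝ} (hlam : Monotone lam) {s : Multiset α} {x z : α}
    {p : ℕ} (hmax : ∀ q, p < q → ∀ y, s.countP (fun w => dist y w < lam q) < q)
    (hzx : 2 * lam p ≤ dist z x) (hz : IsSparseAt lam (s.filter fun w => ¬ dist x w < lam p) z) :
    IsSparseAt lam s z := by
  intro m hm
  rcases le_or_gt m p with hmp | hpm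
  · have hnear :
        (s.filter fun w => dist x w < lam p).countP (fun w => dist z w < lam m) = 0 := by
      refine countP_eq_zero.2 fun w hw hzw => ?_
      have hxw := (mem_filter.1 hw).2
      linarith [dist_triangle z w x, dist_comm w x, hlam hmp]
    rw [countP_eq_countP_filter_add _ _ fun w => dist x w < lam p, hnear, zero_add]
    exact hz m hm
  · exact hmax m hpm z

theorem exists_balls_cover_not_isSparseAt {lam : ℕ → ℝ} (hlam : Monotone lam) (hlam1 : 0 < lam 1)
    (s : Multiset α) :
    ∃ (k : ℕ) (x : Fin k → α) (p : Fin k → ℕ), ∑ j, p j = card s ∧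
      {z | ¬ IsSparseAt lam s z} ⊆ ⋃ j, ball (x j) (2 * lam (p j)) := by
  induction hn : card s using Nat.strong_induction_on generalizing s with
  | _ n ih =>
  rcases eq_or_ne s 0 with rfl | hs
  · refine ⟨0, Fin.elim0, Fin.elim0, by simp [← hn], fun z hz => absurd (fun m hm => ?_) hz⟩
    simpa using hm
  obtain ⟨p, x, hp, hcount, hmax⟩ := exists_maximal_cluster hlam hlam1 hs
  set t := s.filter fun w => ¬ dist x w < lam p
  have ht : p + card t = n := by
    rw [← hn, card_eq_countP_add_countP (fun w => dist x w < lam p) s, hcount,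
      countP_eq_card_filter]
  obtain ⟨k, y, q, hsum, hcover⟩ := ih (card t) (by omega) t rfl
  refine ⟨k + 1, Fin.cons x y, Fin.cons p q, by rw [Fin.sum_cons, hsum, ht], fun z hz => ?_⟩
  by_contra hz'
  simp only [Set.mem_iUnion, Fin.exists_fin_succ, Fin.cons_zero, Fin.cons_succ, mem_ball,
    not_or, not_exists, not_lt] at hz'
  have hzt : IsSparseAt lam t z := by
    by_contra hnot
    obtain ⟨j, hj⟩ := Set.mem_iUnion.1 (hcover hnot)
    exact (hz'.2 j).not_gt hj
  exact hz (hzt.of_filter_far hlam hmax hz'.1)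

lemma prod_le_prod_dist_of_isSparseAt {lam : ℕ → ℝ} (hlam : ∀ m, 0 ≤ lam m) {s : Multiset α}
    {z : α} (hz : IsSparseAt lam s z) :
    ∏ m ∈ Finset.range (card s), lam (m + 1) ≤ (s.map (dist z)).prod := by
  classical
  induction hn : card s generalizing s with
  | zero => simp [card_eq_zero.1 hn]
  | succ n ih =>
  obtain ⟨w, hw, hfar⟩ : ∃ w ∈ s, lam (n + 1) ≤ dist z w := by
    by_contra! hnear
    exact (hz (n + 1) n.succ_pos).ne ((countP_eq_card.2 hnear).trans hn)
  rw [← cons_erase hw, map_cons, prod_cons, Finset.prod_range_succ, mul_comm]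
  have hcard : card (s.erase w) = n := by simpa [hn] using card_erase_of_mem hw
  exact mul_le_mul hfar (ih (hz.mono (erase_le w s)) hcard) (Finset.prod_nonneg fun m _ => hlam _)
    dist_nonneg

end Sparse

section Radius

open Finset Nat

lemma exp_neg_le_factorial_div_pow (n : ℕ) : exp (-n) ≤ n ! / (n : ℝ) ^ n := by
  have hpow : (0 : ℝ) < (n : ℝ) ^ n := by exact_mod_cast Nat.pow_self_pos
  rw [exp_neg, ← inv_div]
  exact inv_anti₀ (by positivity) (pow_div_factorial_le_exp _ n.cast_nonneg n)

noncomputable def cartanRadius (h δ : ℝ) (n m : ℕ) : ℝ := h * ((m : ℝ) / n) ^ δ⁻¹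

variable {h δ : ℝ} {n : ℕ}

lemma cartanRadius_nonneg (hh : 0 ≤ h) (m : ℕ) : 0 ≤ cartanRadius h δ n m := by
  unfold cartanRadius; positivity

lemma monotone_cartanRadius (hh : 0 ≤ h) (hδ : 0 < δ) : Monotone (cartanRadius h δ n) := by
  intro m m' hm
  unfold cartanRadius
  gcongr

lemma cartanRadius_one_pos (hh : 0 < h) (hn : 0 < n) : 0 < cartanRadius h δ n 1 := by
  unfold cartanRadius; positivity

lemma pow_le_prod_cartanRadius (hh : 0 ≤ h) (hδ : 0 < δ) :
    (h * exp (-δ⁻¹)) ^ n ≤ ∏ m ∈ range n, cartanRadius h δ n (m + 1) := by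
  have hprod : ∏ m ∈ range n, ((m + 1 : ℕ) : ℝ) / n = n ! / (n : ℝ) ^ n := by
    rw [prod_div_distrib, ← Nat.cast_prod, prod_range_add_one_eq_factorial, prod_const,
      card_range]
  calc (h * exp (-δ⁻¹)) ^ n = h ^ n * exp (-n) ^ δ⁻¹ := by
        rw [mul_pow, ← exp_mul, ← exp_nat_mul]; ring_nf
    _ ≤ h ^ n * (n ! / (n : ℝ) ^ n) ^ δ⁻¹ := by
        gcongr; exact exp_neg_le_factorial_div_pow n
    _ = ∏ m ∈ range n, cartanRadius h δ n (m + 1) := by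
        rw [← hprod, ← finsetProd_rpow _ _ fun m _ => by positivity]
        simp only [cartanRadius, prod_mul_distrib, prod_const, card_range, Nat.cast_add,
          Nat.cast_one]

lemma sum_two_mul_cartanRadius_rpow (hh : 0 ≤ h) (hδ : 0 < δ) (hn : 0 < n) {k : ℕ}
    {p : Fin k → ℕ} (hp : ∑ j, p j = n) :
    ∑ j, (2 * cartanRadius h δ n (p j)) ^ δ = (2 * h) ^ δ := by
  have hterm : ∀ j, (2 * cartanRadius h δ n (p j)) ^ δ = (2 * h) ^ δ * (p j / n) := by
    intro j
    rw [cartanRadius, ← mul_assoc, mul_rpow (by positivity) (by positivity),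
      ← rpow_mul (by positivity), inv_mul_cancel₀ hδ.ne', rpow_one]
  rw [sum_congr rfl fun j _ => hterm j, ← mul_sum, ← sum_div, ← Nat.cast_sum, hp,
    div_self (by positivity), mul_one]

end Radius

theorem exists_balls_cover_prod_dist_lt {α : Type*} [PseudoMetricSpace α] {s : Multiset α}
    (hs : s ≠ 0) {δ h : ℝ} (hδ : 0 < δ) (hh : 0 < h) :
    ∃ (k : ℕ) (x : Fin k → α) (r : Fin k → ℝ), (∀ j, 0 ≤ r j) ∧
      {z | (s.map (dist z)).prod < (h * exp (-δ⁻¹)) ^ Multiset.card s} ⊆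
        ⋃ j, ball (x j) (r j) ∧
      ∑ j, r j ^ δ = (2 * h) ^ δ := by
  have hn : 0 < Multiset.card s := Multiset.card_pos.2 hs
  obtain ⟨k, x, p, hp, hcover⟩ := exists_balls_cover_not_isSparseAt
    (monotone_cartanRadius hh.le hδ) (cartanRadius_one_pos hh hn) s
  refine ⟨k, x, fun j => 2 * cartanRadius h δ _ (p j),
    fun j => mul_nonneg zero_le_two (cartanRadius_nonneg hh.le _),
    fun z hz => hcover fun hsparse => ?_, sum_two_mul_cartanRadius_rpow hh.le hδ hn hp⟩
  exact hz.not_ge ((pow_le_prod_cartanRadius hh.le hδ).trans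
    (prod_le_prod_dist_of_isSparseAt (cartanRadius_nonneg hh.le) hsparse))

lemma Polynomial.Monic.norm_eval_eq_prod_dist_roots {K : Type*} [NormedField K] [IsAlgClosed K]
    {P : Polynomial K} (hP : P.Monic) (z : K) : ‖P.eval z‖ = (P.roots.map (dist z)).prod := by
  rw [(IsAlgClosed.splits P).eval_eq_prod_roots_of_monic hP, ← normHom_apply, map_multiset_prod,
    Multiset.map_map]
  simp [dist_eq_norm]

theorem cartan_sublevel_cover_general (δ : ℝ) (hδ0 : 0 < δ) :
    ∃ C > (0 : ℝ), ∀ (n : ℕ), 1 ≤ n → ∀ (P : Polynomial ℂ),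
      P.Monic → P.natDegree = n → ∀ (a : ℝ), 0 < a →
      ∃ (k : ℕ) (x : Fin k → ℂ) (rad : Fin k → ℝ),
        (∀ j, 0 ≤ rad j) ∧
        ({z : ℂ | z ∈ ball (0 : ℂ) 1 ∧ ‖P.eval z‖ < Real.exp (-a)} ⊆
          ⋃ j, ball (x j) (rad j)) ∧
        (∑ j, rad j ^ δ) ≤ C * Real.exp (-(a * δ) / n) := by
  refine ⟨2 ^ δ * exp 1, by positivity, fun n hn P hP hdeg a _ => ?_⟩
  have hroots : Multiset.card P.roots = n := by
    rw [← hdeg, (IsAlgClosed.splits P).natDegree_eq_card_roots]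
  have hn0 : (n : ℝ) ≠ 0 := by positivity
  obtain ⟨k, x, r, hr, hcover, hsum⟩ := exists_balls_cover_prod_dist_lt
    (Multiset.card_pos.1 (hroots ▸ hn)) hδ0 (exp_pos (δ⁻¹ - a / n))
  have hlevel : (exp (δ⁻¹ - a / n) * exp (-δ⁻¹)) ^ Multiset.card P.roots = exp (-a) := by
    rw [← exp_add, ← exp_nat_mul, hroots]; congr 1; field_simp; ring
  refine ⟨k, x, r, hr, fun z hz => hcover ?_, (hsum.trans ?_).le⟩
  · show (_ : ℝ) < _
    rw [hlevel, ← hP.norm_eval_eq_prod_dist_roots]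
    exact hz.2
  · rw [mul_rpow zero_le_two (exp_pos _).le, ← exp_mul, mul_assoc, ← exp_add]
    congr 2
    field_simp
    ring

/-- Lemma 6.1 (Cartan's lemma): the sublevel set `{|P| < e^{−a}}` of a monic
polynomial of degree `n` inside the unit disk can be covered by finitely many
balls whose radii satisfy `∑ rⱼ^δ ≤ C e^{−aδ/n}`. -/
theorem cartan_sublevel_cover (δ : ℝ) (hδ0 : 0 < δ) (hδ1 : δ ≤ 1) :
    ∃ C > (0 : ℝ), ∀ (n : ℕ), 1 ≤ n → ∀ (P : Polynomial ℂ),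
      P.Monic → P.natDegree = n → ∀ (a : ℝ), 0 < a →
      ∃ (k : ℕ) (x : Fin k → ℂ) (rad : Fin k → ℝ),
        (∀ j, 0 ≤ rad j) ∧
        ({z : ℂ | z ∈ ball (0 : ℂ) 1 ∧ ‖P.eval z‖ < Real.exp (-a)} ⊆
          ⋃ j, ball (x j) (rad j)) ∧
        (∑ j, rad j ^ δ) ≤ C * Real.exp (-(a * δ) / n) :=
  cartan_sublevel_cover_general δ hδ0
end

section
/- There exists a universal constant C > 0 with the following property. Let Λ > 0 and define F : ℂ → ℂ by F(z) = exp(Λ·z). Then for every z ∈ ℂ and every r > 0: (a) N_F(z,r) = N_F(0,r), i.e. the frequency of F is independent of the base point; and (b) N_F(z,r) ≥ Λ·r/2 − C. -/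
open MeasureTheory Metric

/-!
Translating `F(w) = exp(Λw)` by `x` multiplies it by the constant `exp(Λx)`, and the frequency
is invariant under translations and under multiplication by nonzero constants, so `N_F(x,r)`
does not depend on `x`. For the lower bound, the ball `B(r,r)` lies in `B(0,2r)` and has a quarter
of its area, while the average of `|F|²` over it is `e^{2Λr}` times the average over `B(0,r)`;
hence the doubling ratio is at least `e^{2Λr}/4` and `N_F(0,r) ≥ 2Λr - 2`.
-/

section SetAverage

variable {α : Type*} [MeasurableSpace α] {μ : Measure α}

theorem setAverage_const_mul (c : ℝ) (f : α → ℝ) (s : Set α) :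
    ⨍ x in s, c * f x ∂μ = c * ⨍ x in s, f x ∂μ := by
  simp only [setAverage_eq', integral_const_mul]

theorem setAverage_pos_of_forall_pos {f : α → ℝ} {s : Set α} (hs₀ : μ s ≠ 0) (hs : μ s ≠ ⊤)
    (hf : IntegrableOn f s μ) (hpos : ∀ x, 0 < f x) : 0 < ⨍ x in s, f x ∂μ := by
  have hsupp : Function.support f = Set.univ := Set.eq_univ_of_forall fun x => (hpos x).ne'
  have hint : 0 < ∫ x in s, f x ∂μ := by
    refine (setIntegral_pos_iff_support_of_nonneg_ae ?_ hf).2 ?_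
    · exact Filter.Eventually.of_forall fun x => (hpos x).le
    · rwa [hsupp, Set.univ_inter, pos_iff_ne_zero]
  rw [setAverage_eq, smul_eq_mul, measureReal_def]
  exact mul_pos (inv_pos.2 (ENNReal.toReal_pos hs₀ hs)) hint

end SetAverage

theorem setAverage_comp_add_left {G E : Type*} [MeasurableSpace G] [AddGroup G] [MeasurableAdd G]
    [NormedAddCommGroup E] [NormedSpace ℝ E] (μ : Measure G) [μ.IsAddLeftInvariant]
    (f : G → E) (x : G) (s : Set G) :
    ⨍ w in (x + ·) ⁻¹' s, f (x + w) ∂μ = ⨍ w in s, f w ∂μ := by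
  have hμ := measurePreserving_add_left μ x
  have he := (MeasurableEquiv.addLeft x).measurableEmbedding
  rw [setAverage_eq, setAverage_eq, hμ.setIntegral_preimage_emb he, measureReal_def,
    measureReal_def, hμ.measure_preimage_emb he]

theorem setAverage_ball_le_two_pow_mul {E : Type*} [NormedAddCommGroup E] [NormedSpace ℝ E]
    [FiniteDimensional ℝ E] [MeasurableSpace E] [BorelSpace E] (μ : Measure E)
    [μ.IsAddHaarMeasure] {f : E → ℝ} {x y : E} {r : ℝ} (hf : 0 ≤ f)
    (hint : IntegrableOn f (ball x (2 * r)) μ) (hsub : ball y r ⊆ ball x (2 * r)) :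
    ⨍ w in ball y r, f w ∂μ ≤ 2 ^ Module.finrank ℝ E * ⨍ w in ball x (2 * r), f w ∂μ := by
  have hvol : μ.real (ball x (2 * r)) = 2 ^ Module.finrank ℝ E * μ.real (ball y r) := by
    rw [measureReal_def, measureReal_def, Measure.addHaar_ball_mul_of_pos μ x two_pos,
      Measure.addHaar_ball_center μ y, ENNReal.toReal_mul, ENNReal.toReal_ofReal (by positivity)]
  have hmono : ∫ w in ball y r, f w ∂μ ≤ ∫ w in ball x (2 * r), f w ∂μ :=
    setIntegral_mono_set hint (Filter.Eventually.of_forall hf) (Filter.Eventually.of_forall hsub)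
  rw [setAverage_eq, setAverage_eq, smul_eq_mul, smul_eq_mul, hvol, mul_inv,
    mul_assoc, mul_inv_cancel_left₀ (by positivity)]
  exact mul_le_mul_of_nonneg_left hmono (inv_nonneg.2 measureReal_nonneg)

theorem freq_comp_add_left (F : ℂ → ℂ) (x y : ℂ) (r : ℝ) :
    freq (fun w => F (x + w)) y r = freq F (x + y) r := by
  have havg : ∀ s, ⨍ w in ball y s, ‖F (x + w)‖ ^ 2 = ⨍ w in ball (x + y) s, ‖F w‖ ^ 2 := by
    intro s
    rw [← setAverage_comp_add_left volume (fun w => ‖F w‖ ^ 2) x, preimage_add_left_ball,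
      neg_add_cancel_left]
  simp only [freq, havg]

theorem freq_const_mul (F : ℂ → ℂ) {c : ℂ} (hc : c ≠ 0) (x : ℂ) (r : ℝ) :
    freq (fun w => c * F w) x r = freq F x r := by
  simp only [freq, norm_mul, mul_pow, setAverage_const_mul]
  rw [mul_div_mul_left _ _ (by positivity)]

theorem freq_eq_freq_zero_of_add_eq_mul {F : ℂ → ℂ} {x c : ℂ} (hc : c ≠ 0)
    (hF : ∀ w, F (x + w) = c * F w) (r : ℝ) : freq F x r = freq F 0 r := by
  calc freq F x r = freq (fun w => F (x + w)) 0 r := by rw [freq_comp_add_left, add_zero]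
    _ = freq F 0 r := by simp only [hF, freq_const_mul F hc]

theorem sub_two_le_logb_two_exp_div_four {t : ℝ} (ht : 0 ≤ t) :
    t - 2 ≤ Real.logb 2 (Real.exp t / 4) := by
  have hlog : 0 < Real.log 2 := Real.log_pos one_lt_two
  have hlog_lt : Real.log 2 < 1 := by linarith [Real.log_two_lt_d9]
  have h4 : Real.logb 2 4 = 2 := by
    rw [show (4 : ℝ) = 2 ^ (2 : ℕ) by norm_num, Real.logb_pow, Real.logb_self_eq_one one_lt_two,
      mul_one, Nat.cast_ofNat]
  rw [Real.logb_div (Real.exp_ne_zero t) four_ne_zero, h4, Real.logb, Real.log_exp,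
    sub_le_sub_iff_right, le_div_iff₀ hlog]
  nlinarith

theorem norm_exp_ofReal_mul_sq (Λ t : ℝ) : ‖Complex.exp (Λ * t)‖ ^ 2 = Real.exp (2 * Λ * t) := by
  rw [← Complex.ofReal_mul, Complex.norm_exp_ofReal, ← Real.exp_nat_mul]
  ring_nf

theorem logb_two_exp_div_four_le_freq_exp (Λ : ℝ) {r : ℝ} (hr : 0 < r) :
    Real.logb 2 (Real.exp (2 * Λ * r) / 4) ≤ freq (fun w => Complex.exp (Λ * w)) 0 r := by
  set f : ℂ → ℝ := fun w => ‖Complex.exp (Λ * w)‖ ^ 2 with hf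
  have hint : ∀ x s, IntegrableOn f (ball x s) :=
    fun x s => ((by fun_prop : Continuous f).locallyIntegrable.integrableOn_isCompact
      (isCompact_closedBall x s)).mono_set ball_subset_closedBall
  have hpos : 0 < ⨍ w in ball 0 r, f w :=
    setAverage_pos_of_forall_pos (measure_ball_pos volume 0 hr).ne' measure_ball_lt_top.ne
      (hint 0 r) fun w => pow_pos (norm_pos_iff.2 (Complex.exp_ne_zero _)) 2
  have hshift : ⨍ w in ball (r : ℂ) r, f w = Real.exp (2 * Λ * r) * ⨍ w in ball 0 r, f w := by
    rw [← setAverage_comp_add_left volume f (r : ℂ), preimage_add_left_ball, neg_add_cancel,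
      ← norm_exp_ofReal_mul_sq, ← setAverage_const_mul]
    simp only [hf, mul_add, Complex.exp_add, norm_mul, mul_pow]
  have hsub : ball (r : ℂ) r ⊆ ball 0 (2 * r) :=
    ball_subset_ball' <| by
      rw [dist_zero_right, Complex.norm_real, Real.norm_of_nonneg hr.le]; linarith
  have hdouble :=
    setAverage_ball_le_two_pow_mul volume (fun w => by positivity) (hint 0 (2 * r)) hsub
  rw [Complex.finrank_real_complex] at hdouble
  refine Real.logb_le_logb_of_le one_lt_two (by positivity) ?_
  rw [le_div_iff₀ hpos]
  linarith

/-- The sharpness example `F(z) = exp(Λz)`: its frequency is independent of the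
base point, and `N_F(z,r) ≥ Λr/2 − C` for a universal constant `C`. -/
theorem exp_sharpness_example :
    ∃ C > (0 : ℝ), ∀ (Λ : ℝ), 0 < Λ → ∀ (z : ℂ) (r : ℝ), 0 < r →
      freq (fun w => Complex.exp (Λ * w)) z r = freq (fun w => Complex.exp (Λ * w)) 0 r ∧
      Λ * r / 2 - C ≤ freq (fun w => Complex.exp (Λ * w)) z r := by
  refine ⟨2, two_pos, fun Λ hΛ z r hr => ?_⟩
  have hz : freq (fun w => Complex.exp (Λ * w)) z r = freq (fun w => Complex.exp (Λ * w)) 0 r :=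
    freq_eq_freq_zero_of_add_eq_mul (Complex.exp_ne_zero (Λ * z))
      (fun w => by rw [mul_add, Complex.exp_add]) r
  refine ⟨hz, ?_⟩
  calc Λ * r / 2 - 2 ≤ 2 * Λ * r - 2 := by nlinarith
    _ ≤ Real.logb 2 (Real.exp (2 * Λ * r) / 4) := sub_two_le_logb_two_exp_div_four (by positivity)
    _ ≤ freq (fun w => Complex.exp (Λ * w)) z r := hz ▸ logb_two_exp_div_four_le_freq_exp Λ hr
end

section
/- Let Ω ⊂ ℝ² be open and let u : ℝ² → ℝ be three times continuously differentiable on Ω. Let p ∈ Ω be a point with ∇u(p) ≠ 0. Then, at the point p, Δ(log |∇u|) = div( (Δu / |∇u|²) · ∇u ); explicitly, writing w = log √(u_x² + u_y²) on the neighborhood of p where ∇u ≠ 0 and Δu = u_{xx} + u_{yy}, one has w_{xx}(p) + w_{yy}(p) = ∂_x( Δu·u_x/(u_x² + u_y²) )(p) + ∂_y( Δu·u_y/(u_x² + u_y²) )(p). -/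
/-!
Write `a = u_x`, `b = u_y`, `s = a² + b²` and `L = a_x + b_y`, and let `θ_v = (a ∂_v b - b ∂_v a) / s`
be the pullback of the angular form `dθ` under `(a, b)`. Since `a_y = b_x`, the gradient of
`w = log √s` splits as `∇w = (L / s) (a, b) + (-θ_y, θ_x)`. The second summand is divergence free
because `dθ` is closed, `∂_x θ_y = ∂_y θ_x`, which only uses the symmetry of the second derivatives
of `a` and `b`.
-/

open Filter Topology

noncomputable def pdx (f : ℝ × ℝ → ℝ) (p : ℝ × ℝ) : ℝ := fderiv ℝ f p (1, 0)

noncomputable def pdy (f : ℝ × ℝ → ℝ) (p : ℝ × ℝ) : ℝ := fderiv ℝ f p (0, 1)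

noncomputable def lap (f : ℝ × ℝ → ℝ) (p : ℝ × ℝ) : ℝ := pdx (pdx f) p + pdy (pdy f) p

section DirectionalDerivative

variable {E : Type*} [NormedAddCommGroup E] [NormedSpace ℝ E] {a b f g : E → ℝ} {x : E}

theorem fderiv_fun_mul_apply (hf : DifferentiableAt ℝ f x) (hg : DifferentiableAt ℝ g x)
    (v : E) : fderiv ℝ (fun y => f y * g y) x v = fderiv ℝ f x v * g x + f x * fderiv ℝ g x v := by
  simp [fderiv_fun_mul hf hg]
  ring

theorem fderiv_fun_div_apply (hf : DifferentiableAt ℝ f x) (hg : DifferentiableAt ℝ g x)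
    (hx : g x ≠ 0) (v : E) :
    fderiv ℝ (fun y => f y / g y) x v =
      (fderiv ℝ f x v * g x - f x * fderiv ℝ g x v) / g x ^ 2 := by
  have hd := hf.hasFDerivAt.fun_mul ((hasDerivAt_inv hx).comp_hasFDerivAt x hg.hasFDerivAt)
  simp only [Function.comp_apply, ← div_eq_mul_inv] at hd
  rw [hd.fderiv]
  simp
  field_simp
  ring

theorem fderiv_sq_add_sq_apply (hf : DifferentiableAt ℝ f x) (hg : DifferentiableAt ℝ g x)
    (v : E) : fderiv ℝ (fun y => f y ^ 2 + g y ^ 2) x v =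
      2 * f x * fderiv ℝ f x v + 2 * g x * fderiv ℝ g x v := by
  simp [fderiv_fun_add (hf.fun_pow 2) (hg.fun_pow 2), fderiv_fun_pow 2 hf, fderiv_fun_pow 2 hg]

theorem fderiv_log_sqrt_sq_add_sq_apply (hf : DifferentiableAt ℝ f x)
    (hg : DifferentiableAt ℝ g x) (hx : f x ^ 2 + g x ^ 2 ≠ 0) (v : E) :
    fderiv ℝ (fun y => Real.log (Real.sqrt (f y ^ 2 + g y ^ 2))) x v =
      (f x * fderiv ℝ f x v + g x * fderiv ℝ g x v) / (f x ^ 2 + g x ^ 2) := by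
  have hpos : 0 < f x ^ 2 + g x ^ 2 := lt_of_le_of_ne (by positivity) hx.symm
  have hd := (((hf.fun_pow 2).fun_add (hg.fun_pow 2)).hasFDerivAt.sqrt hpos.ne').log
    (Real.sqrt_ne_zero'.mpr hpos)
  rw [hd.fderiv]
  simp only [smul_apply, smul_eq_mul, fderiv_sq_add_sq_apply hf hg]
  field_simp
  rw [Real.sq_sqrt hpos.le]

theorem contDiffAt_fderiv_apply {m n : WithTop ℕ∞} (hf : ContDiffAt ℝ n f x) (hmn : m + 1 ≤ n)
    (v : E) : ContDiffAt ℝ m (fun y => fderiv ℝ f y v) x :=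
  (hf.fderiv_right hmn).clm_apply contDiffAt_const

theorem differentiableAt_fderiv_apply (hf : ContDiffAt ℝ 2 f x) (v : E) :
    DifferentiableAt ℝ (fun y => fderiv ℝ f y v) x :=
  (contDiffAt_fderiv_apply hf le_rfl v).differentiableAt one_ne_zero

theorem fderiv_fderiv_apply_comm (hf : ContDiffAt ℝ 2 f x) (v w : E) :
    fderiv ℝ (fun y => fderiv ℝ f y v) x w = fderiv ℝ (fun y => fderiv ℝ f y w) x v := by
  have hd := (hf.fderiv_right (m := 1) le_rfl).differentiableAt one_ne_zero
  rw [fderiv_clm_apply hd (differentiableAt_const v), fderiv_clm_apply hd (differentiableAt_const w)]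
  simpa using hf.isSymmSndFDerivAt (by simp [minSmoothness_of_isRCLikeNormedField]) w v

noncomputable def angularForm (a b : E → ℝ) (v x : E) : ℝ :=
  (a x * fderiv ℝ b x v - b x * fderiv ℝ a x v) / (a x ^ 2 + b x ^ 2)

theorem differentiableAt_angularForm (ha : ContDiffAt ℝ 2 a x) (hb : ContDiffAt ℝ 2 b x)
    (hx : a x ^ 2 + b x ^ 2 ≠ 0) (v : E) : DifferentiableAt ℝ (angularForm a b v) x := by
  have := differentiableAt_fderiv_apply ha v
  have := differentiableAt_fderiv_apply hb v
  have := ha.differentiableAt two_ne_zero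
  have := hb.differentiableAt two_ne_zero
  unfold angularForm
  fun_prop (disch := exact hx)

theorem fderiv_angularForm_comm (ha : ContDiffAt ℝ 2 a x) (hb : ContDiffAt ℝ 2 b x)
    (hx : a x ^ 2 + b x ^ 2 ≠ 0) (v w : E) :
    fderiv ℝ (angularForm a b v) x w = fderiv ℝ (angularForm a b w) x v := by
  have hda := ha.differentiableAt two_ne_zero
  have hdb := hb.differentiableAt two_ne_zero
  have expand : ∀ v w : E, fderiv ℝ (angularForm a b v) x w =
      ((fderiv ℝ a x w * fderiv ℝ b x v + a x * fderiv ℝ (fun y => fderiv ℝ b y v) x w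
          - (fderiv ℝ b x w * fderiv ℝ a x v + b x * fderiv ℝ (fun y => fderiv ℝ a y v) x w))
          * (a x ^ 2 + b x ^ 2)
        - (a x * fderiv ℝ b x v - b x * fderiv ℝ a x v)
          * (2 * a x * fderiv ℝ a x w + 2 * b x * fderiv ℝ b x w)) / (a x ^ 2 + b x ^ 2) ^ 2 := by
    intro v w
    have hav := differentiableAt_fderiv_apply ha v
    have hbv := differentiableAt_fderiv_apply hb v
    have hnum : DifferentiableAt ℝ (fun y => a y * fderiv ℝ b y v - b y * fderiv ℝ a y v) x := by
      fun_prop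
    have hden : DifferentiableAt ℝ (fun y => a y ^ 2 + b y ^ 2) x := by fun_prop
    unfold angularForm
    rw [fderiv_fun_div_apply hnum hden hx, fderiv_fun_sub (by fun_prop) (by fun_prop),
      sub_apply, fderiv_fun_mul_apply hda hbv, fderiv_fun_mul_apply hdb hav,
      fderiv_sq_add_sq_apply hda hdb]
  rw [expand, expand, fderiv_fderiv_apply_comm ha, fderiv_fderiv_apply_comm hb]
  ring

end DirectionalDerivative

theorem lap_log_sqrt_sq_add_sq {a b : ℝ × ℝ → ℝ} {p : ℝ × ℝ} (ha : ContDiffAt ℝ 2 a p)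
    (hb : ContDiffAt ℝ 2 b p) (hcurl : ∀ᶠ q in 𝓝 p, pdy a q = pdx b q)
    (hp : a p ^ 2 + b p ^ 2 ≠ 0) :
    lap (fun q => Real.log (Real.sqrt (a q ^ 2 + b q ^ 2))) p =
      pdx (fun q => (pdx a q + pdy b q) * a q / (a q ^ 2 + b q ^ 2)) p +
        pdy (fun q => (pdx a q + pdy b q) * b q / (a q ^ 2 + b q ^ 2)) p := by
  set w := fun q => Real.log (Real.sqrt (a q ^ 2 + b q ^ 2)) with hw
  set F := fun q => (pdx a q + pdy b q) * a q / (a q ^ 2 + b q ^ 2) with hF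
  set G := fun q => (pdx a q + pdy b q) * b q / (a q ^ 2 + b q ^ 2) with hG
  have hpos : ∀ᶠ q in 𝓝 p, 0 < a q ^ 2 + b q ^ 2 := by
    have hcont : ContinuousAt (fun q => a q ^ 2 + b q ^ 2) p := by
      have := ha.continuousAt; have := hb.continuousAt; fun_prop
    exact hcont.eventually (lt_mem_nhds (by positivity))
  have hnear := (ha.eventually (by simp)).and ((hb.eventually (by simp)).and (hpos.and hcurl))
  have hx : pdx w =ᶠ[𝓝 p] fun q => F q - angularForm a b (0, 1) q := by
    filter_upwards [hnear] with q ⟨haq, hbq, hq, hcurlq⟩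
    have hda := haq.differentiableAt two_ne_zero
    have hdb := hbq.differentiableAt two_ne_zero
    simp only [hw, hF, pdx, pdy, angularForm] at hcurlq ⊢
    rw [fderiv_log_sqrt_sq_add_sq_apply hda hdb hq.ne', hcurlq]
    field_simp
    ring
  have hy : pdy w =ᶠ[𝓝 p] fun q => G q + angularForm a b (1, 0) q := by
    filter_upwards [hnear] with q ⟨haq, hbq, hq, hcurlq⟩
    have hda := haq.differentiableAt two_ne_zero
    have hdb := hbq.differentiableAt two_ne_zero
    simp only [hw, hG, pdx, pdy, angularForm] at hcurlq ⊢
    rw [fderiv_log_sqrt_sq_add_sq_apply hda hdb hq.ne', hcurlq]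
    field_simp
    ring
  have hda := ha.differentiableAt two_ne_zero
  have hdb := hb.differentiableAt two_ne_zero
  have hdax := differentiableAt_fderiv_apply ha (1, 0)
  have hdby := differentiableAt_fderiv_apply hb (0, 1)
  have hdF : DifferentiableAt ℝ F p := by
    simp only [hF, pdx, pdy]; fun_prop (disch := exact hp)
  have hdG : DifferentiableAt ℝ G p := by
    simp only [hG, pdx, pdy]; fun_prop (disch := exact hp)
  calc lap w p
    _ = fderiv ℝ (pdx w) p (1, 0) + fderiv ℝ (pdy w) p (0, 1) := rfl
    _ = fderiv ℝ (fun q => F q - angularForm a b (0, 1) q) p (1, 0)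
        + fderiv ℝ (fun q => G q + angularForm a b (1, 0) q) p (0, 1) := by
      rw [hx.fderiv_eq, hy.fderiv_eq]
    _ = fderiv ℝ F p (1, 0) + fderiv ℝ G p (0, 1)
        - (fderiv ℝ (angularForm a b (0, 1)) p (1, 0)
          - fderiv ℝ (angularForm a b (1, 0)) p (0, 1)) := by
      rw [fderiv_fun_sub hdF (differentiableAt_angularForm ha hb hp _),
        fderiv_fun_add hdG (differentiableAt_angularForm ha hb hp _), sub_apply, add_apply]
      ring
    _ = fderiv ℝ F p (1, 0) + fderiv ℝ G p (0, 1) := by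
      rw [fderiv_angularForm_comm ha hb hp, sub_self, sub_zero]

/-- Proposition 8.1 (smooth case): for a `C³` function `u` on an open set
`Ω ⊆ ℝ²` and a point `p ∈ Ω` with `∇u(p) ≠ 0`, one has
`Δ(log |∇u|)(p) = div((Δu/|∇u|²)·∇u)(p)`. -/
theorem laplacian_log_grad_identity (Ω : Set (ℝ × ℝ)) (hΩ : IsOpen Ω)
    (u : ℝ × ℝ → ℝ) (hu : ContDiffOn ℝ 3 u Ω)
    (p : ℝ × ℝ) (hp : p ∈ Ω)
    (hgrad : (pdx u p, pdy u p) ≠ (0, 0)) :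
    lap (fun q => Real.log (Real.sqrt ((pdx u q) ^ 2 + (pdy u q) ^ 2))) p =
      pdx (fun q => lap u q * pdx u q / ((pdx u q) ^ 2 + (pdy u q) ^ 2)) p +
        pdy (fun q => lap u q * pdy u q / ((pdx u q) ^ 2 + (pdy u q) ^ 2)) p := by
  have hu3 : ContDiffAt ℝ 3 u p := hu.contDiffAt (hΩ.mem_nhds hp)
  have hcurl : ∀ᶠ q in 𝓝 p, pdy (pdx u) q = pdx (pdy u) q := by
    filter_upwards [hu3.eventually (by simp)] with q hq
    exact fderiv_fderiv_apply_comm (hq.of_le (by norm_num)) (1, 0) (0, 1)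
  have hne : pdx u p ^ 2 + pdy u p ^ 2 ≠ 0 := by
    contrapose! hgrad
    obtain ⟨hx, hy⟩ := (add_eq_zero_iff_of_nonneg (sq_nonneg _) (sq_nonneg _)).1 hgrad
    simp_all
  exact lap_log_sqrt_sq_add_sq (contDiffAt_fderiv_apply hu3 (by norm_num) _)
    (contDiffAt_fderiv_apply hu3 (by norm_num) _) hcurl hne
end
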